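/- (The square root of W_L2 satisfies the triangle inequality.) For point clouds X of size n, Y of size m, and Z of size p in ℝ^d, one has √(W_L2(X,Z)) ≤ √(W_L2(X,Y)) + √(W_L2(Y,Z)). In particular, √W_L2 defines a (pseudo-)metric on point clouds. -/

import Mathlib

/-!
Optimal couplings exist because the couplings form a compact set. Given optimal couplings `T₁` of
`X, Y` and `T₂` of `Y, Z`, glue them along the middle cloud into the three-way plan
`m · T₁ i j · T₂ j k`: its two-fold marginals are `T₁`, `T₂` and the coupling `m • (T₁ * T₂)` of
`X, Z`. With respect to this plan, `√(cost)` is a weighted `L²` norm of `X i - Z k`, and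
`X i - Z k = (X i - Y j) + (Y j - Z k)`, so Minkowski's inequality finishes the proof.
-/

open scoped RealInnerProductSpace BigOperators

noncomputable section

def sigmoid (t : ℝ) : ℝ := 1 / (1 + Real.exp (-t))

def Coupling (n m : ℕ) : Set (Matrix (Fin n) (Fin m) ℝ) :=
  {T | (∀ i j, 0 ≤ T i j) ∧ (∀ i, ∑ j, T i j = 1 / (n : ℝ)) ∧
       (∀ j, ∑ i, T i j = 1 / (m : ℝ))}

def WL2 {n m d : ℕ} (X : Fin n → EuclideanSpace ℝ (Fin d))
    (Y : Fin m → EuclideanSpace ℝ (Fin d)) : ℝ :=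
  sInf ((fun T : Matrix (Fin n) (Fin m) ℝ =>
    ∑ i, ∑ j, T i j * ‖X i - Y j‖ ^ 2) '' Coupling n m)

def Wdot {n m d : ℕ} (X : Fin n → EuclideanSpace ℝ (Fin d))
    (Y : Fin m → EuclideanSpace ℝ (Fin d)) : ℝ :=
  sSup ((fun T : Matrix (Fin n) (Fin m) ℝ =>
    ∑ i, ∑ j, T i j * ⟪X i, Y j⟫) '' Coupling n m)

open Finset

section TransportCost

variable {ι κ E : Type*} [Fintype ι] [Fintype κ] [SeminormedAddCommGroup E]

def transportCost (X : ι → E) (Y : κ → E) (T : Matrix ι κ ℝ) : ℝ :=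
  ∑ i, ∑ j, T i j * ‖X i - Y j‖ ^ 2

theorem transportCost_nonneg (X : ι → E) (Y : κ → E) {T : Matrix ι κ ℝ}
    (hT : ∀ i j, 0 ≤ T i j) : 0 ≤ transportCost X Y T :=
  sum_nonneg fun i _ => sum_nonneg fun j _ => mul_nonneg (hT i j) (sq_nonneg _)

theorem continuous_transportCost (X : ι → E) (Y : κ → E) :
    Continuous (transportCost X Y) := by
  unfold transportCost
  fun_prop

theorem sqrt_sum_mul_norm_sub_sq_le [NormedSpace ℝ E] {w : ι → ℝ} (hw : ∀ i, 0 ≤ w i)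
    (x y z : ι → E) :
    √(∑ i, w i * ‖x i - z i‖ ^ 2) ≤
      √(∑ i, w i * ‖x i - y i‖ ^ 2) + √(∑ i, w i * ‖y i - z i‖ ^ 2) := by
  let L : (ι → E) → PiLp 2 (fun _ : ι => E) := fun f => WithLp.toLp 2 fun i => √(w i) • f i
  have norm_L : ∀ f, ‖L f‖ = √(∑ i, w i * ‖f i‖ ^ 2) := fun f => by
    simp [L, PiLp.norm_eq_of_L2, norm_smul, mul_pow, Real.sq_sqrt (hw _)]
  have L_add : L (fun i => x i - z i) = L (fun i => x i - y i) + L (fun i => y i - z i) := by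
    ext i
    simp [L, ← smul_add]
  rw [← norm_L, ← norm_L, ← norm_L, L_add]
  exact norm_add_le _ _

end TransportCost

section Couplings

variable {n m : ℕ}

theorem coupling_apply_le_one {T : Matrix (Fin n) (Fin m) ℝ} (hT : T ∈ Coupling n m) (i j) :
    T i j ≤ 1 :=
  calc T i j ≤ ∑ j', T i j' := single_le_sum (fun j' _ => hT.1 i j') (mem_univ j)
    _ = 1 / n := hT.2.1 i
    _ ≤ 1 := by simpa only [one_div] using Nat.cast_inv_le_one n

theorem isClosed_coupling (n m : ℕ) : IsClosed (Coupling n m) := by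
  simp only [Coupling, Set.ofPred_and, Set.ofPred_forall]
  refine .inter (isClosed_iInter fun i => isClosed_iInter fun j => isClosed_le ?_ ?_)
    (.inter (isClosed_iInter fun i => isClosed_eq ?_ ?_)
      (isClosed_iInter fun j => isClosed_eq ?_ ?_)) <;> fun_prop

theorem isCompact_coupling (n m : ℕ) : IsCompact (Coupling n m) :=
  (isCompact_univ_pi fun _ => isCompact_univ_pi fun _ => isCompact_Icc).of_isClosed_subset
    (isClosed_coupling n m) fun _ hT i _ j _ => ⟨hT.1 i j, coupling_apply_le_one hT i j⟩

theorem const_mem_coupling (hn : 0 < n) (hm : 0 < m) :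
    Matrix.of (fun _ _ => 1 / ((n : ℝ) * m)) ∈ Coupling n m := by
  refine ⟨fun i j => by simp only [Matrix.of_apply]; positivity, fun i => ?_, fun j => ?_⟩ <;>
    simp only [Matrix.of_apply, sum_const, card_univ, Fintype.card_fin, nsmul_eq_mul] <;>
    field_simp

theorem WL2_le_transportCost {d : ℕ} (X : Fin n → EuclideanSpace ℝ (Fin d))
    (Y : Fin m → EuclideanSpace ℝ (Fin d)) {T : Matrix (Fin n) (Fin m) ℝ}
    (hT : T ∈ Coupling n m) :
    WL2 X Y ≤ transportCost X Y T :=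
  csInf_le ⟨0, Set.forall_mem_image.2 fun _ hT' => transportCost_nonneg X Y hT'.1⟩ ⟨T, hT, rfl⟩

theorem exists_transportCost_eq_WL2 {d : ℕ} (X : Fin n → EuclideanSpace ℝ (Fin d))
    (Y : Fin m → EuclideanSpace ℝ (Fin d)) (hn : 0 < n) (hm : 0 < m) :
    ∃ T ∈ Coupling n m, transportCost X Y T = WL2 X Y :=
  ((isCompact_coupling n m).image (continuous_transportCost X Y)).sInf_mem
    (Set.image_nonempty.2 ⟨_, const_mem_coupling hn hm⟩)

end Couplings

section Gluing

variable {n m p : ℕ}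

def gluing (T₁ : Matrix (Fin n) (Fin m) ℝ) (T₂ : Matrix (Fin m) (Fin p) ℝ)
    (q : Fin n × Fin m × Fin p) : ℝ :=
  m * T₁ q.1 q.2.1 * T₂ q.2.1 q.2.2

variable {T₁ : Matrix (Fin n) (Fin m) ℝ} {T₂ : Matrix (Fin m) (Fin p) ℝ}

theorem gluing_nonneg (h₁ : ∀ i j, 0 ≤ T₁ i j) (h₂ : ∀ j k, 0 ≤ T₂ j k) (q) :
    0 ≤ gluing T₁ T₂ q :=
  mul_nonneg (mul_nonneg m.cast_nonneg (h₁ _ _)) (h₂ _ _)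

theorem sum_gluing_last (h₂ : ∀ j, ∑ k, T₂ j k = 1 / m) (hm : 0 < m) (i j) :
    ∑ k, gluing T₁ T₂ (i, j, k) = T₁ i j := by
  simp only [gluing, ← mul_sum, h₂]
  field_simp [hm.ne']

theorem sum_gluing_first (h₁ : ∀ j, ∑ i, T₁ i j = 1 / m) (hm : 0 < m) (j k) :
    ∑ i, gluing T₁ T₂ (i, j, k) = T₂ j k := by
  simp only [gluing, ← sum_mul, ← mul_sum, h₁]
  field_simp [hm.ne']

theorem smul_mul_apply_eq_sum_gluing (i k) :
    ((m : ℝ) • (T₁ * T₂)) i k = ∑ j, gluing T₁ T₂ (i, j, k) := by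
  simp only [Matrix.smul_apply, Matrix.mul_apply, smul_eq_mul, mul_sum, gluing, mul_assoc]

theorem smul_mul_mem_coupling (h₁ : T₁ ∈ Coupling n m) (h₂ : T₂ ∈ Coupling m p) (hm : 0 < m) :
    (m : ℝ) • (T₁ * T₂) ∈ Coupling n p := by
  refine ⟨fun i k => ?_, fun i => ?_, fun k => ?_⟩ <;> simp only [smul_mul_apply_eq_sum_gluing]
  · exact sum_nonneg fun j _ => gluing_nonneg h₁.1 h₂.1 _
  · rw [sum_comm]
    simp only [sum_gluing_last h₂.2.1 hm, h₁.2.1]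
  · rw [sum_comm]
    simp only [sum_gluing_first h₁.2.2 hm, h₂.2.2]

theorem sqrt_transportCost_smul_mul_le {E : Type*} [SeminormedAddCommGroup E] [NormedSpace ℝ E]
    (X : Fin n → E) (Y : Fin m → E) (Z : Fin p → E) (h₁ : T₁ ∈ Coupling n m)
    (h₂ : T₂ ∈ Coupling m p) (hm : 0 < m) :
    √(transportCost X Z ((m : ℝ) • (T₁ * T₂))) ≤
      √(transportCost X Y T₁) + √(transportCost Y Z T₂) := by
  have cost_XZ : transportCost X Z ((m : ℝ) • (T₁ * T₂)) =
      ∑ q, gluing T₁ T₂ q * ‖X q.1 - Z q.2.2‖ ^ 2 := by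
    simp only [transportCost, smul_mul_apply_eq_sum_gluing, Fintype.sum_prod_type, sum_mul]
    exact sum_congr rfl fun i _ => sum_comm
  have cost_XY : transportCost X Y T₁ = ∑ q, gluing T₁ T₂ q * ‖X q.1 - Y q.2.1‖ ^ 2 := by
    simp only [transportCost, Fintype.sum_prod_type, ← sum_mul, sum_gluing_last h₂.2.1 hm]
  have cost_YZ : transportCost Y Z T₂ = ∑ q, gluing T₁ T₂ q * ‖Y q.2.1 - Z q.2.2‖ ^ 2 := by
    simp only [transportCost, Fintype.sum_prod_type]
    conv_rhs => rw [sum_comm]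
    refine sum_congr rfl fun j _ => ?_
    conv_rhs => rw [sum_comm]
    simp only [← sum_mul, sum_gluing_first h₁.2.2 hm]
  rw [cost_XZ, cost_XY, cost_YZ]
  exact sqrt_sum_mul_norm_sub_sq_le (gluing_nonneg h₁.1 h₂.1) _ _ _

end Gluing

theorem stmt_8 {n m p d : ℕ} (hn : 1 ≤ n) (hm : 1 ≤ m) (hp : 1 ≤ p)
    (X : Fin n → EuclideanSpace ℝ (Fin d)) (Y : Fin m → EuclideanSpace ℝ (Fin d))
    (Z : Fin p → EuclideanSpace ℝ (Fin d)) :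
    Real.sqrt (WL2 X Z) ≤ Real.sqrt (WL2 X Y) + Real.sqrt (WL2 Y Z) := by
  obtain ⟨T₁, hT₁, cost_T₁⟩ := exists_transportCost_eq_WL2 X Y hn hm
  obtain ⟨T₂, hT₂, cost_T₂⟩ := exists_transportCost_eq_WL2 Y Z hm hp
  calc √(WL2 X Z) ≤ √(transportCost X Z ((m : ℝ) • (T₁ * T₂))) :=
        Real.sqrt_le_sqrt (WL2_le_transportCost X Z (smul_mul_mem_coupling hT₁ hT₂ hm))
    _ ≤ √(transportCost X Y T₁) + √(transportCost Y Z T₂) :=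
        sqrt_transportCost_smul_mul_le X Y Z hT₁ hT₂ hm
    _ = √(WL2 X Y) + √(WL2 Y Z) := by rw [cost_T₁, cost_T₂]
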